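/- The family CF_cb of capacity-bounded context-free languages is closed under union: if L₁, L₂ ∈ CF_cb then L₁ ∪ L₂ ∈ CF_cb. -/

import Mathlib

/-! Common definitions: symbols, context-free grammars, Ginsburg–Spanier phrase
structure grammars, capacity-bounded derivations, matrix/vector grammars,
finite index, cf Petri nets with place capacities, and language families. -/

inductive Symb (N T : Type) where
  | nt : N → Symb N T
  | tm : T → Symb N T
deriving DecidableEq

namespace CapGram

variable {N T Δ α : Type}

open Classical in
/-- Number of occurrences of the nonterminal `A` in a sentential form. -/
noncomputable def symCount (A : N) : List (Symb N T) → ℕ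
  | [] => 0
  | Symb.nt B :: r => (if B = A then 1 else 0) + symCount A r
  | Symb.tm _ :: r => symCount A r

/-- Total number of nonterminal occurrences in a sentential form. -/
def ntCount : List (Symb N T) → ℕ
  | [] => 0
  | Symb.nt _ :: r => 1 + ntCount r
  | Symb.tm _ :: r => ntCount r

/-- The sentential form `w` respects the capacity function `κ`. -/
def CapOK (κ : N → ℕ) (w : List (Symb N T)) : Prop :=
  ∀ A : N, symCount A w ≤ κ A

/-- A context-free grammar (rules are pairs of a nonterminal and a word). -/
structure CFG (N T : Type) where
  start : N
  rules : Finset (N × List (Symb N T))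

/-- Application of a single context-free rule. -/
def applyRule (r : N × List (Symb N T)) (u v : List (Symb N T)) : Prop :=
  ∃ x y : List (Symb N T), u = x ++ Symb.nt r.1 :: y ∧ v = x ++ r.2 ++ y

def CFG.Step (G : CFG N T) (u v : List (Symb N T)) : Prop :=
  ∃ r ∈ G.rules, applyRule r u v

/-- A derivation step both of whose sentential forms respect the capacity. -/
def CFG.CapStep (G : CFG N T) (κ : N → ℕ) (u v : List (Symb N T)) : Prop :=
  G.Step u v ∧ CapOK κ u ∧ CapOK κ v

/-- A derivation step both of whose sentential forms have at most `k`
nonterminal occurrences in total. -/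
def CFG.IdxStep (G : CFG N T) (k : ℕ) (u v : List (Symb N T)) : Prop :=
  G.Step u v ∧ ntCount u ≤ k ∧ ntCount v ≤ k

/-- The (unrestricted) language of a context-free grammar. -/
def CFG.Lang (G : CFG N T) : Set (List T) :=
  { w | Relation.ReflTransGen G.Step [Symb.nt G.start] (w.map Symb.tm) }

/-- The language of the capacity-bounded grammar `(G, κ)`. -/
def CFG.CapLang (G : CFG N T) (κ : N → ℕ) : Set (List T) :=
  { w | Relation.ReflTransGen (G.CapStep κ) [Symb.nt G.start] (w.map Symb.tm) }

/-- Words with a derivation of index at most `k`. -/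
def CFG.FinLang (G : CFG N T) (k : ℕ) : Set (List T) :=
  { w | Relation.ReflTransGen (G.IdxStep k) [Symb.nt G.start] (w.map Symb.tm) }

/-- A phrase structure grammar due to Ginsburg and Spanier: the left-hand side
of a rule is a nonempty word of nonterminals, encoded as head and tail. -/
structure GSG (N T : Type) where
  start : N
  rules : Finset ((N × List N) × List (Symb N T))

def GSG.Step (G : GSG N T) (u v : List (Symb N T)) : Prop :=
  ∃ r ∈ G.rules, ∃ x y : List (Symb N T),
    u = x ++ (r.1.1 :: r.1.2).map Symb.nt ++ y ∧ v = x ++ r.2 ++ y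

def GSG.CapStep (G : GSG N T) (κ : N → ℕ) (u v : List (Symb N T)) : Prop :=
  G.Step u v ∧ CapOK κ u ∧ CapOK κ v

def GSG.Lang (G : GSG N T) : Set (List T) :=
  { w | Relation.ReflTransGen G.Step [Symb.nt G.start] (w.map Symb.tm) }

def GSG.CapLang (G : GSG N T) (κ : N → ℕ) : Set (List T) :=
  { w | Relation.ReflTransGen (G.CapStep κ) [Symb.nt G.start] (w.map Symb.tm) }

/-- Derivations labeled by their sequence of context-free rules, where every
sentential form (including the first and last) satisfies the invariant `P`. -/
inductive DerivP (P : List (Symb N T) → Prop) :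
    List (N × List (Symb N T)) → List (Symb N T) → List (Symb N T) → Prop
  | nil (u : List (Symb N T)) : P u → DerivP P [] u u
  | cons {r π u v w} : P u → applyRule r u v → DerivP P π v w →
      DerivP P (r :: π) u w

/-- A matrix grammar: a finite set of matrices (sequences of cf rules). -/
structure MG (N T : Type) where
  start : N
  mats : Finset (List (N × List (Symb N T)))

/-- Matrix language: rule sequences are concatenations of matrices. -/
def MG.Lang (G : MG N T) : Set (List T) :=
  { w | ∃ ms : List (List (N × List (Symb N T))),
      (∀ m ∈ ms, m ∈ G.mats) ∧
      DerivP (fun _ => True) ms.flatten [Symb.nt G.start] (w.map Symb.tm) }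

/-- Words with a matrix derivation of index at most `k`. -/
def MG.FinLang (G : MG N T) (k : ℕ) : Set (List T) :=
  { w | ∃ ms : List (List (N × List (Symb N T))),
      (∀ m ∈ ms, m ∈ G.mats) ∧
      DerivP (fun u => ntCount u ≤ k) ms.flatten [Symb.nt G.start] (w.map Symb.tm) }

/-- `Shuffle ms π`: `π` is an interleaving (shuffle) of the lists in `ms`. -/
inductive Shuffle : List (List α) → List α → Prop
  | nil (ms : List (List α)) : (∀ l ∈ ms, l = []) → Shuffle ms []
  | cons {ms₁ : List (List α)} {l : List α} {ms₂ : List (List α)} {π : List α}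
      (a : α) : Shuffle (ms₁ ++ l :: ms₂) π →
      Shuffle (ms₁ ++ (a :: l) :: ms₂) (a :: π)

/-- A vector grammar: like a matrix grammar, but derivations use shuffles. -/
structure VG (N T : Type) where
  start : N
  mats : Finset (List (N × List (Symb N T)))

def VG.Lang (G : VG N T) : Set (List T) :=
  { w | ∃ ms π, (∀ m ∈ ms, m ∈ G.mats) ∧ Shuffle ms π ∧
      DerivP (fun _ => True) π [Symb.nt G.start] (w.map Symb.tm) }

def VG.CapLang (G : VG N T) (κ : N → ℕ) : Set (List T) :=
  { w | ∃ ms π, (∀ m ∈ ms, m ∈ G.mats) ∧ Shuffle ms π ∧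
      DerivP (CapOK κ) π [Symb.nt G.start] (w.map Symb.tm) }

def VG.FinLang (G : VG N T) (k : ℕ) : Set (List T) :=
  { w | ∃ ms π, (∀ m ∈ ms, m ∈ G.mats) ∧ Shuffle ms π ∧
      DerivP (fun u => ntCount u ≤ k) π [Symb.nt G.start] (w.map Symb.tm) }

/-! cf Petri nets: places are in bijection with the nonterminals, transitions
with the rules; firing the transition of rule `A → α` consumes one token from
the place of `A` and adds `|α|_X` tokens to the place of each nonterminal `X`. -/

open Classical in
/-- Firing of the transition corresponding to rule `r`, turning marking `μ`
into marking `μ'`. -/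
noncomputable def ruleFire (r : N × List (Symb N T)) (μ μ' : N → ℕ) : Prop :=
  1 ≤ μ r.1 ∧ ∀ A, μ' A = μ A - (if A = r.1 then 1 else 0) + symCount A r.2

/-- Occurrence sequences of the cf Petri net of `G`, all of whose markings
(including initial and final) satisfy the validity predicate `P`. -/
inductive FireSeqP (G : CFG N T) (P : (N → ℕ) → Prop) :
    List (N × List (Symb N T)) → (N → ℕ) → (N → ℕ) → Prop
  | nil (μ : N → ℕ) : P μ → FireSeqP G P [] μ μ
  | cons {r π μ μ' μ''} : r ∈ G.rules → P μ → ruleFire r μ μ' →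
      FireSeqP G P π μ' μ'' → FireSeqP G P (r :: π) μ μ''

open Classical in
/-- The initial marking: one token on the place of the start symbol. -/
noncomputable def initMark (G : CFG N T) : N → ℕ :=
  fun A => if A = G.start then 1 else 0

/-- The language of `G` controlled by its cf Petri net restricted to markings
satisfying `P` (e.g. a place capacity constraint). -/
def CFG.PNLang (G : CFG N T) (P : (N → ℕ) → Prop) : Set (List T) :=
  { w | ∃ π μ, DerivP (fun _ => True) π [Symb.nt G.start] (w.map Symb.tm) ∧
      FireSeqP G P π (initMark G) μ }

/-! Language families over a terminal alphabet `T`. -/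

/-- Context-free languages of finite index. -/
def CFfin (T : Type) : Set (Set (List T)) :=
  { L | ∃ (N : Type) (_ : Fintype N) (G : CFG N T) (k : ℕ),
      L = G.Lang ∧ G.Lang ⊆ G.FinLang k }

/-- Languages of capacity-bounded context-free grammars. -/
def CFcb (T : Type) : Set (Set (List T)) :=
  { L | ∃ (N : Type) (_ : Fintype N) (G : CFG N T) (κ : N → ℕ),
      L = G.CapLang κ }

/-- Languages of capacity-bounded Ginsburg–Spanier phrase structure grammars. -/
def GScb (T : Type) : Set (Set (List T)) :=
  { L | ∃ (N : Type) (_ : Fintype N) (G : GSG N T) (κ : N → ℕ),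
      L = G.CapLang κ }

/-- Matrix languages of finite index. -/
def MATfin (T : Type) : Set (Set (List T)) :=
  { L | ∃ (N : Type) (_ : Fintype N) (G : MG N T) (k : ℕ),
      L = G.Lang ∧ G.Lang ⊆ G.FinLang k }

/-- Capacity-bounded vector languages (erasing rules allowed). -/
def Vcb (T : Type) : Set (Set (List T)) :=
  { L | ∃ (N : Type) (_ : Fintype N) (G : VG N T) (κ : N → ℕ),
      L = G.CapLang κ }

/-- Vector languages of finite index (erasing rules allowed). -/
def Vfin (T : Type) : Set (Set (List T)) :=
  { L | ∃ (N : Type) (_ : Fintype N) (G : VG N T) (k : ℕ),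
      L = G.Lang ∧ G.Lang ⊆ G.FinLang k }

/-- Languages of grammars controlled by cf Petri nets with place capacities. -/
def PNcap (T : Type) : Set (Set (List T)) :=
  { L | ∃ (N : Type) (_ : Fintype N) (G : CFG N T) (κ : N → ℕ),
      L = G.PNLang (fun μ => ∀ A, μ A ≤ κ A) }


section UnionAux

variable {N M T : Type}

def mapS (f : N → M) : Symb N T → Symb M T
  | .nt a => .nt (f a)
  | .tm t => .tm t

lemma mapS_tm_map (f : N → M) (w : List T) :
    (w.map Symb.tm).map (mapS f) = w.map Symb.tm := by
  induction w with
  | nil => rfl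
  | cons a l ih => simp [mapS, ih]

lemma map_mapS_retract (f : N → M) (g : M → N) (hgf : ∀ A, g (f A) = A)
    (l : List (Symb N T)) : (l.map (mapS f)).map (mapS g) = l := by
  induction l with
  | nil => rfl
  | cons s r ih =>
    cases s with
    | nt a => simp [mapS, hgf, ih]
    | tm t => simp [mapS, ih]

lemma symCount_map (f : N → M) (hf : Function.Injective f)
    (A : N) (l : List (Symb N T)) :
    symCount (f A) (l.map (mapS f)) = symCount A l := by
  induction l with
  | nil => rfl
  | cons s r ih =>
    cases s with
    | nt B =>
      by_cases h : B = A
      · subst h; simp [mapS, symCount, ih]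
      · have h2 : f B ≠ f A := fun he => h (hf he)
        simp [mapS, symCount, ih, h, h2]
    | tm t => simpa [mapS, symCount] using ih

lemma symCount_map_notin (f : N → M) (B : M) (hB : ∀ A, f A ≠ B)
    (l : List (Symb N T)) : symCount B (l.map (mapS f)) = 0 := by
  induction l with
  | nil => rfl
  | cons s r ih =>
    cases s with
    | nt C => simp [mapS, symCount, ih, hB C]
    | tm t => simpa [mapS, symCount] using ih

lemma symCount_unmap (f : N → M) (g : M → N) (hgf : ∀ A, g (f A) = A)
    (A : N) (u : List (Symb M T))
    (hu : ∀ B, Symb.nt B ∈ u → ∃ C, B = f C) :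
    symCount A (u.map (mapS g)) = symCount (f A) u := by
  induction u with
  | nil => rfl
  | cons s r ih =>
    have ih' := ih (fun B hB => hu B (List.mem_cons_of_mem _ hB))
    cases s with
    | nt B =>
      obtain ⟨C, rfl⟩ := hu B List.mem_cons_self
      by_cases h : C = A
      · subst h; simp [mapS, symCount, ih', hgf]
      · have h2 : f C ≠ f A := fun he => h (by rw [← hgf C, he, hgf])
        simp [mapS, symCount, ih', hgf, h, h2]
    | tm t => simpa [mapS, symCount] using ih'

lemma capOK_map (f : N → M) (g : M → N) (hgf : ∀ A, g (f A) = A)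
    (κ₁ : N → ℕ) (κ' : M → ℕ) (hκ : ∀ A, κ' (f A) = κ₁ A)
    {u : List (Symb N T)} (h : CapOK κ₁ u) : CapOK κ' (u.map (mapS f)) := by
  have hf : Function.Injective f := fun a b hab => by rw [← hgf a, hab, hgf]
  intro B
  by_cases hB : ∃ A, f A = B
  · obtain ⟨A, rfl⟩ := hB
    rw [symCount_map f hf A u, hκ]
    exact h A
  · rw [symCount_map_notin f B (fun A hA => hB ⟨A, hA⟩)]
    exact Nat.zero_le _

lemma capOK_unmap (f : N → M) (g : M → N) (hgf : ∀ A, g (f A) = A)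
    (κ₁ : N → ℕ) (κ' : M → ℕ) (hκ : ∀ A, κ' (f A) = κ₁ A)
    {u : List (Symb M T)} (hu : ∀ B, Symb.nt B ∈ u → ∃ C, B = f C)
    (h : CapOK κ' u) : CapOK κ₁ (u.map (mapS g)) := by
  intro A
  rw [symCount_unmap f g hgf A u hu, ← hκ A]
  exact h (f A)

lemma capDeriv_map (f : N → M) (g : M → N) (hgf : ∀ A, g (f A) = A)
    (G₁ : CFG N T) (G' : CFG M T)
    (hrules : ∀ r ∈ G₁.rules, (f r.1, r.2.map (mapS f)) ∈ G'.rules)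
    (κ₁ : N → ℕ) (κ' : M → ℕ) (hκ : ∀ A, κ' (f A) = κ₁ A)
    {u v : List (Symb N T)}
    (h : Relation.ReflTransGen (G₁.CapStep κ₁) u v) :
    Relation.ReflTransGen (G'.CapStep κ') (u.map (mapS f)) (v.map (mapS f)) := by
  induction h with
  | refl => exact .refl
  | tail _ hstep ih =>
    refine ih.tail ?_
    obtain ⟨⟨r, hr, x, y, hu, hv⟩, hcu, hcv⟩ := hstep
    refine ⟨⟨(f r.1, r.2.map (mapS f)), hrules r hr, x.map (mapS f), y.map (mapS f), ?_, ?_⟩,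
      capOK_map f g hgf κ₁ κ' hκ hcu, capOK_map f g hgf κ₁ κ' hκ hcv⟩
    · subst hu; simp [mapS]
    · subst hv; simp

lemma capStep_unmap (f : N → M) (g : M → N) (hgf : ∀ A, g (f A) = A)
    (G₁ : CFG N T) (G' : CFG M T)
    (hpure : ∀ r ∈ G'.rules, ∀ A, r.1 = f A →
      ∃ α, (A, α) ∈ G₁.rules ∧ r.2 = α.map (mapS f))
    (κ₁ : N → ℕ) (κ' : M → ℕ) (hκ : ∀ A, κ' (f A) = κ₁ A)
    {u v : List (Symb M T)} (h : G'.CapStep κ' u v)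
    (hu : ∀ B, Symb.nt B ∈ u → ∃ C, B = f C) :
    (∀ B, Symb.nt B ∈ v → ∃ C, B = f C) ∧
      G₁.CapStep κ₁ (u.map (mapS g)) (v.map (mapS g)) := by
  obtain ⟨⟨r, hr, x, y, hux, hvx⟩, hcu, hcv⟩ := h
  obtain ⟨A, hA⟩ := hu r.1 (by rw [hux]; simp)
  obtain ⟨α, hα, hr2⟩ := hpure r hr A hA
  have hvInl : ∀ B, Symb.nt B ∈ v → ∃ C, B = f C := by
    intro B hB
    rw [hvx] at hB
    rcases List.mem_append.1 hB with hB | hB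
    · rcases List.mem_append.1 hB with hB | hB
      · exact hu B (by rw [hux]; exact List.mem_append_left _ hB)
      · rw [hr2] at hB
        obtain ⟨s, hs, hsB⟩ := List.mem_map.1 hB
        cases s with
        | nt C => simp [mapS] at hsB; exact ⟨C, hsB.symm⟩
        | tm t => simp [mapS] at hsB
    · exact hu B (by rw [hux]; exact List.mem_append_right _ (List.mem_cons_of_mem _ hB))
  refine ⟨hvInl, ⟨⟨(A, α), hα, x.map (mapS g), y.map (mapS g), ?_, ?_⟩,
    capOK_unmap f g hgf κ₁ κ' hκ hu hcu, capOK_unmap f g hgf κ₁ κ' hκ hvInl hcv⟩⟩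
  · rw [hux]; simp [mapS, hA, hgf]
  · rw [hvx, hr2]; simp [map_mapS_retract f g hgf]

lemma capDeriv_unmap (f : N → M) (g : M → N) (hgf : ∀ A, g (f A) = A)
    (G₁ : CFG N T) (G' : CFG M T)
    (hpure : ∀ r ∈ G'.rules, ∀ A, r.1 = f A →
      ∃ α, (A, α) ∈ G₁.rules ∧ r.2 = α.map (mapS f))
    (κ₁ : N → ℕ) (κ' : M → ℕ) (hκ : ∀ A, κ' (f A) = κ₁ A)
    {u v : List (Symb M T)}
    (h : Relation.ReflTransGen (G'.CapStep κ') u v)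
    (hu : ∀ B, Symb.nt B ∈ u → ∃ C, B = f C) :
    (∀ B, Symb.nt B ∈ v → ∃ C, B = f C) ∧
      Relation.ReflTransGen (G₁.CapStep κ₁) (u.map (mapS g)) (v.map (mapS g)) := by
  induction h with
  | refl => exact ⟨hu, .refl⟩
  | tail _ hstep ih =>
    obtain ⟨hInl, hd⟩ := ih
    obtain ⟨hInl', hstep'⟩ := capStep_unmap f g hgf G₁ G' hpure κ₁ κ' hκ hstep hInl
    exact ⟨hInl', hd.tail hstep'⟩

lemma capLang_side_incl (f : N → M) (g : M → N) (hgf : ∀ A, g (f A) = A)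
    (G₁ : CFG N T) (G' : CFG M T)
    (hrules : ∀ r ∈ G₁.rules, (f r.1, r.2.map (mapS f)) ∈ G'.rules)
    (κ₁ : N → ℕ) (κ' : M → ℕ) (hκ : ∀ A, κ' (f A) = κ₁ A)
    (hsrule : (G'.start, [Symb.nt (f G₁.start)]) ∈ G'.rules)
    (hscap : 1 ≤ κ' G'.start) :
    G₁.CapLang κ₁ ⊆ G'.CapLang κ' := by
  intro w hw
  rcases Relation.ReflTransGen.cases_head hw with h | ⟨b, hstep, _⟩
  · exfalso; cases w <;> simp_all
  · have hcap1 : 1 ≤ κ₁ G₁.start := by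
      have := hstep.2.1 G₁.start
      simpa [symCount] using this
    have hd := capDeriv_map f g hgf G₁ G' hrules κ₁ κ' hκ hw
    rw [mapS_tm_map] at hd
    refine Relation.ReflTransGen.head (b := [Symb.nt (f G₁.start)])
      ⟨⟨(G'.start, [Symb.nt (f G₁.start)]), hsrule, [], [], rfl, by simp⟩, ?_, ?_⟩
      (by simpa [mapS] using hd)
    · intro B
      by_cases hB : G'.start = B
      · subst hB; simpa [symCount] using hscap
      · simp [symCount, hB]
    · intro B
      by_cases hB : f G₁.start = B
      · subst hB; rw [hκ] at *; simpa [symCount] using hcap1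
      · simp [symCount, hB]

end UnionAux

/-- CF_cb is closed under union. -/
theorem CFcb_closed_union (T : Type) (L₁ L₂ : Set (List T))
    (h₁ : L₁ ∈ CFcb T) (h₂ : L₂ ∈ CFcb T) : L₁ ∪ L₂ ∈ CFcb T := by
  classical
  obtain ⟨N₁, i₁, G₁, κ₁, rfl⟩ := h₁
  obtain ⟨N₂, i₂, G₂, κ₂, rfl⟩ := h₂
  haveI := i₁; haveI := i₂
  let f₁ : N₁ → Option (N₁ ⊕ N₂) := fun A => some (Sum.inl A)
  let f₂ : N₂ → Option (N₁ ⊕ N₂) := fun A => some (Sum.inr A)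
  let g₁ : Option (N₁ ⊕ N₂) → N₁ := fun B => match B with
    | some (Sum.inl A) => A
    | _ => G₁.start
  let g₂ : Option (N₁ ⊕ N₂) → N₂ := fun B => match B with
    | some (Sum.inr A) => A
    | _ => G₂.start
  have hgf₁ : ∀ A, g₁ (f₁ A) = A := fun A => rfl
  have hgf₂ : ∀ A, g₂ (f₂ A) = A := fun A => rfl
  let G' : CFG (Option (N₁ ⊕ N₂)) T :=
    { start := none
      rules :=
        (G₁.rules.image (fun r => (f₁ r.1, r.2.map (mapS f₁)))) ∪
        (G₂.rules.image (fun r => (f₂ r.1, r.2.map (mapS f₂)))) ∪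
        {(none, [Symb.nt (f₁ G₁.start)]), (none, [Symb.nt (f₂ G₂.start)])} }
  let κ' : Option (N₁ ⊕ N₂) → ℕ := fun B => match B with
    | none => 1
    | some (Sum.inl A) => κ₁ A
    | some (Sum.inr A) => κ₂ A
  have hκ₁ : ∀ A, κ' (f₁ A) = κ₁ A := fun A => rfl
  have hκ₂ : ∀ A, κ' (f₂ A) = κ₂ A := fun A => rfl
  have hrules₁ : ∀ r ∈ G₁.rules, (f₁ r.1, r.2.map (mapS f₁)) ∈ G'.rules := by
    intro r hr
    simp only [G', Finset.mem_union, Finset.mem_image]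
    exact Or.inl (Or.inl ⟨r, hr, rfl⟩)
  have hrules₂ : ∀ r ∈ G₂.rules, (f₂ r.1, r.2.map (mapS f₂)) ∈ G'.rules := by
    intro r hr
    simp only [G', Finset.mem_union, Finset.mem_image]
    exact Or.inl (Or.inr ⟨r, hr, rfl⟩)
  have hpure₁ : ∀ r ∈ G'.rules, ∀ A, r.1 = f₁ A →
      ∃ α, (A, α) ∈ G₁.rules ∧ r.2 = α.map (mapS f₁) := by
    intro r hr A hA
    simp only [G', Finset.mem_union, Finset.mem_image, Finset.mem_insert,
      Finset.mem_singleton] at hr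
    rcases hr with (⟨s, hs, rfl⟩ | ⟨s, hs, rfl⟩) | (rfl | rfl)
    · simp only [f₁] at hA
      obtain rfl : s.1 = A := by injection hA with h; injection h
      exact ⟨s.2, hs, rfl⟩
    · exact absurd hA (by simp [f₁, f₂])
    · exact absurd hA (by simp [f₁])
    · exact absurd hA (by simp [f₁])
  have hpure₂ : ∀ r ∈ G'.rules, ∀ A, r.1 = f₂ A →
      ∃ α, (A, α) ∈ G₂.rules ∧ r.2 = α.map (mapS f₂) := by
    intro r hr A hA
    simp only [G', Finset.mem_union, Finset.mem_image, Finset.mem_insert,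
      Finset.mem_singleton] at hr
    rcases hr with (⟨s, hs, rfl⟩ | ⟨s, hs, rfl⟩) | (rfl | rfl)
    · exact absurd hA (by simp [f₁, f₂])
    · simp only [f₂] at hA
      obtain rfl : s.1 = A := by injection hA with h; injection h
      exact ⟨s.2, hs, rfl⟩
    · exact absurd hA (by simp [f₂])
    · exact absurd hA (by simp [f₂])
  have hsrule₁ : (G'.start, [Symb.nt (f₁ G₁.start)]) ∈ G'.rules := by
    simp only [G', Finset.mem_union, Finset.mem_insert, Finset.mem_singleton]
    exact Or.inr (Or.inl trivial)
  have hsrule₂ : (G'.start, [Symb.nt (f₂ G₂.start)]) ∈ G'.rules := by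
    simp only [G', Finset.mem_union, Finset.mem_insert, Finset.mem_singleton]
    exact Or.inr (Or.inr trivial)
  refine ⟨Option (N₁ ⊕ N₂), inferInstance, G', κ', ?_⟩
  apply Set.eq_of_subset_of_subset
  · -- union ⊆ CapLang G'
    rintro w (hw | hw)
    · exact capLang_side_incl f₁ g₁ hgf₁ G₁ G' hrules₁ κ₁ κ' hκ₁ hsrule₁ le_rfl hw
    · exact capLang_side_incl f₂ g₂ hgf₂ G₂ G' hrules₂ κ₂ κ' hκ₂ hsrule₂ le_rfl hw
  · intro w hw
    rcases Relation.ReflTransGen.cases_head hw with h | ⟨b, hstep, hrest⟩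
    · exfalso; cases w <;> simp_all
    · obtain ⟨⟨r, hr, x, y, hux, hvx⟩, _, _⟩ := hstep
      obtain ⟨rfl, h1, rfl⟩ : x = [] ∧ r.1 = G'.start ∧ y = [] := by
        cases x with
        | nil =>
          simp only [List.nil_append, List.cons.injEq] at hux
          exact ⟨rfl, by injection hux.1.symm, hux.2.symm⟩
        | cons a x' => simp at hux
      have hb : b = r.2 := by simpa using hvx
      simp only [G', Finset.mem_union, Finset.mem_image, Finset.mem_insert,
        Finset.mem_singleton] at hr
      rcases hr with (⟨s, _, rfl⟩ | ⟨s, _, rfl⟩) | (rfl | rfl)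
      · exact absurd h1 (by simp [G', f₁])
      · exact absurd h1 (by simp [G', f₂])
      · -- first side
        left
        subst hb
        have hInl : ∀ B, Symb.nt B ∈ ([Symb.nt (f₁ G₁.start)] : List (Symb (Option (N₁ ⊕ N₂)) T)) → ∃ C, B = f₁ C := by
          intro B hB
          simp only [List.mem_singleton, Symb.nt.injEq] at hB
          exact ⟨G₁.start, hB⟩
        obtain ⟨_, hd⟩ := capDeriv_unmap f₁ g₁ hgf₁ G₁ G' hpure₁ κ₁ κ' hκ₁ hrest hInl
        rw [mapS_tm_map] at hd
        simpa [CFG.CapLang, mapS, hgf₁] using hd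
      · -- second side
        right
        subst hb
        have hInl : ∀ B, Symb.nt B ∈ ([Symb.nt (f₂ G₂.start)] : List (Symb (Option (N₁ ⊕ N₂)) T)) → ∃ C, B = f₂ C := by
          intro B hB
          simp only [List.mem_singleton, Symb.nt.injEq] at hB
          exact ⟨G₂.start, hB⟩
        obtain ⟨_, hd⟩ := capDeriv_unmap f₂ g₂ hgf₂ G₂ G' hpure₂ κ₂ κ' hκ₂ hrest hInl
        rw [mapS_tm_map] at hd
        simpa [CFG.CapLang, mapS, hgf₂] using hd

end CapGram
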